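/- For any real theta characteristics: let g ≥ 1, let M be a symmetric g × g integer matrix, and consider the group G_M of pairs (A, ·) with A ∈ GL(g, ℤ) and A M Aᵀ ≡ M (mod 2). Then the map sending (A, [β]₂) to [A β - (1/2)·diag(A M Aᵀ - M)]₂ defines a group action of G_M on (ℤ/2ℤ)^g. -/

import Mathlib

/-!
With `D(A) = A M Aᵀ - M` one has the cocycle identity `D(A A') = A D(A') Aᵀ + D(A)`. If `D(A')`
is even, write it as `2 E` with `E` symmetric; compatibility with the group law then reduces to
`(A E Aᵀ)ᵢᵢ ≡ (A · diag E)ᵢ (mod 2)`, i.e. `xᵀ E x ≡ ∑ⱼ Eⱼⱼ xⱼ (mod 2)` for symmetric `E`: the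
off-diagonal terms cancel in pairs and `xⱼ² ≡ xⱼ`.
-/

open Matrix

/-- The action of a matrix `A` (with `A M Aᵀ ≡ M (mod 2)`) on integer characteristic
vectors: `β ↦ A β - (1/2)·diag(A M Aᵀ - M)` (integer division, exact under the
hypothesis). -/
def act {g : ℕ} (M A : Matrix (Fin g) (Fin g) ℤ) (β : Fin g → ℤ) : Fin g → ℤ :=
  fun i => A.mulVec β i - ((A * M * Aᵀ - M) i i) / 2

open Finset

theorem Finset.sum_sum_eq_sum_diag_of_symm {ι R : Type*} [Fintype ι] [Ring R] [CharP R 2]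
    (f : ι → ι → R) (hf : ∀ j k, f j k = f k j) : ∑ j, ∑ k, f j k = ∑ j, f j j := by
  classical
  have hoff : ∑ p ∈ (univ : Finset ι).offDiag, f p.1 p.2 = 0 :=
    sum_involution (fun p _ => p.swap)
      (fun p _ => by rw [Prod.fst_swap, Prod.snd_swap, hf p.2 p.1, CharTwo.add_self_eq_zero])
      (fun p hp _ h => (mem_offDiag.mp hp).2.2 (congrArg Prod.fst h).symm)
      (fun p hp => by simpa [eq_comm] using hp)
      (fun p _ => p.swap_swap)
  rw [← sum_product', ← diag_union_offDiag, sum_union (disjoint_diag_offDiag _), sum_diag, hoff,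
    add_zero]

theorem Matrix.mul_mul_transpose_apply_self_modEq_two {n : Type*} [Fintype n]
    (A E : Matrix n n ℤ) (hE : E.IsSymm) (i : n) :
    (A * E * Aᵀ) i i ≡ (A *ᵥ E.diag) i [ZMOD 2] := by
  apply (ZMod.intCast_eq_intCast_iff _ _ 2).mp
  have hidem : ∀ x : ZMod 2, x * x = x := by decide
  simp only [mul_apply, mulVec, dotProduct, transpose_apply, diag_apply, sum_mul]
  push_cast
  rw [sum_comm, Finset.sum_sum_eq_sum_diag_of_symm]
  · exact sum_congr rfl fun j _ => by rw [mul_right_comm, hidem]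
  · intro j k; rw [hE.apply]; ring

theorem Matrix.exists_isSymm_eq_two_smul {n : Type*} {D : Matrix n n ℤ} (hD : D.IsSymm)
    (heven : ∀ i j, 2 ∣ D i j) : ∃ E : Matrix n n ℤ, E.IsSymm ∧ D = 2 • E :=
  ⟨D.map (· / 2), IsSymm.ext fun i j => by simp [hD.apply],
    ext fun i j => by simp [Int.mul_ediv_cancel' (heven i j)]⟩

theorem Matrix.IsSymm.mul_mul_transpose {n α : Type*} [Fintype n] [CommSemiring α]
    {M : Matrix n n α} (hM : M.IsSymm) (A : Matrix n n α) : (A * M * Aᵀ).IsSymm := by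
  rw [IsSymm, transpose_mul, transpose_mul, transpose_transpose, hM.eq, Matrix.mul_assoc]

theorem Matrix.mul_mul_transpose_sub_of_mul {n α : Type*} [Fintype n] [CommRing α]
    (A A' M : Matrix n n α) :
    A * A' * M * (A * A')ᵀ - M = A * (A' * M * A'ᵀ - M) * Aᵀ + (A * M * Aᵀ - M) := by
  simp only [transpose_mul, Matrix.mul_sub, Matrix.sub_mul, Matrix.mul_assoc]
  abel

variable {g : ℕ} {M : Matrix (Fin g) (Fin g) ℤ}

theorem act_one (β : Fin g → ℤ) : act M 1 β = β := by
  ext i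
  simp [act]

theorem act_modEq_of_modEq (A : Matrix (Fin g) (Fin g) ℤ) {β β' : Fin g → ℤ}
    (h : ∀ i, β i ≡ β' i [ZMOD 2]) (i : Fin g) : act M A β i ≡ act M A β' i [ZMOD 2] :=
  Int.ModEq.sub_right _ (Int.ModEq.sum fun j _ => (h j).mul_left (A i j) :
    ∑ j, A i j * β j ≡ ∑ j, A i j * β' j [ZMOD 2])

theorem act_mul_modEq (hM : M.IsSymm) (A : Matrix (Fin g) (Fin g) ℤ)
    {A' : Matrix (Fin g) (Fin g) ℤ} (hA' : ∀ i j, (A' * M * A'ᵀ) i j ≡ M i j [ZMOD 2])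
    (β : Fin g → ℤ) (i : Fin g) : act M (A * A') β i ≡ act M A (act M A' β) i [ZMOD 2] := by
  obtain ⟨E, hE, hhalf⟩ : ∃ E : Matrix (Fin g) (Fin g) ℤ, E.IsSymm ∧ A' * M * A'ᵀ - M = 2 • E :=
    exists_isSymm_eq_two_smul ((hM.mul_mul_transpose A').sub hM) fun i j => (hA' i j).symm.dvd
  have hact' : act M A' β = A' *ᵥ β - E.diag := by
    ext j
    rw [act, hhalf]
    simp
  have hlhs : act M (A * A') β i =
      (A *ᵥ A' *ᵥ β) i - (A * E * Aᵀ) i i - (A * M * Aᵀ - M) i i / 2 := by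
    rw [act, mul_mul_transpose_sub_of_mul, hhalf, Matrix.mul_smul, Matrix.smul_mul, ← mulVec_mulVec,
      Matrix.add_apply, Matrix.smul_apply, nsmul_eq_mul, Nat.cast_ofNat]
    omega
  rw [hlhs, act, hact', mulVec_sub, Pi.sub_apply]
  exact ((Int.ModEq.refl _).sub (A.mul_mul_transpose_apply_self_modEq_two E hE i)).sub_right _

theorem stmt14 (g : ℕ)
    (M : Matrix (Fin g) (Fin g) ℤ) (hM : M.IsSymm) :
    -- well-definedness on (ℤ/2)^g
    (∀ A : Matrix (Fin g) (Fin g) ℤ, IsUnit A.det →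
      (∀ i j, (A * M * Aᵀ) i j ≡ M i j [ZMOD 2]) →
      ∀ β β' : Fin g → ℤ, (∀ i, β i ≡ β' i [ZMOD 2]) →
        ∀ i, act M A β i ≡ act M A β' i [ZMOD 2]) ∧
    -- the identity acts trivially
    (∀ β : Fin g → ℤ, ∀ i, act M 1 β i ≡ β i [ZMOD 2]) ∧
    -- compatibility with the group law
    (∀ A A' : Matrix (Fin g) (Fin g) ℤ, IsUnit A.det → IsUnit A'.det →
      (∀ i j, (A * M * Aᵀ) i j ≡ M i j [ZMOD 2]) →
      (∀ i j, (A' * M * A'ᵀ) i j ≡ M i j [ZMOD 2]) →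
      ∀ β : Fin g → ℤ, ∀ i,
        act M (A * A') β i ≡ act M A (act M A' β) i [ZMOD 2]) :=
  ⟨fun A _ _ _ _ hβ i => act_modEq_of_modEq A hβ i,
    fun β i => by rw [act_one],
    fun A _ _ _ _ hA' β i => act_mul_modEq hM A hA' β i⟩
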